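/- Under the Misiurewicz assumption, fix δ ∈ (0,1) with |Df^{n0}(w)| > exp(α/2) for all w ∈ B(P(f), 3δ), and set V := B(P(f), δ). Then there exists δ0 > 0 such that: if z ∈ ℂ, k ≥ 1, f^j(z) ∈ V for j = 1, …, k, and |Df^k(z)| > 1, then there is an open neighbourhood U of z with U ⊂ B(z, δ) such that f^k restricted to U is injective and f^k(U) = B(f^k(z), Δ·δ0). -/

import Mathlib

open Function Metric Set

/-- `Df f k z = ∏_{j=1}^k f^j(z)`, the derivative of the k-th iterate of
`f(z) = λ·exp z` at `z`. -/
noncomputable def Df (f : ℂ → ℂ) (k : ℕ) (z : ℂ) : ℂ :=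
  ∏ j ∈ Finset.range k, f^[j + 1] z

/-- The post-singular set of `f`: the closure of the forward orbit of `0`. -/
def postSing (f : ℂ → ℂ) : Set ℂ :=
  closure (Set.range fun n => f^[n] (0 : ℂ))

/-!
The inverse branch of `f^k` along the orbit `z, f z, …, f^k z` is built one step at a time: the
branch of `f⁻¹` sending `f w` to `w` is `y ↦ w + log (y / f w)`, and since
`|log (1 + t)| ≤ |t| / (1 - |t|)`, a relative error `ε` at `f w` becomes an absolute error at most
`ε / (1 - ε)` at `w`. Uniform expansion along orbits in `V` makes the relative errors decay
geometrically back along the orbit, so the accumulated distortion `∏ (1 - ε_j)⁻¹` stays bounded and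
a ball of fixed radius `r` around `f^k z` is pulled back holomorphically into `B(z, 4r)`. The image
of that ball is open by the open mapping theorem, and `f^k` inverts the branch on it.
-/

section Derivative

variable {f : ℂ → ℂ}

theorem Df_succ' (n : ℕ) (z : ℂ) : Df f (n + 1) z = f z * Df f n (f z) := by
  simp only [Df, Finset.prod_range_succ', iterate_succ_apply, iterate_zero_apply, mul_comm]

theorem Df_add (a b : ℕ) (z : ℂ) : Df f (a + b) z = Df f a z * Df f b (f^[a] z) := by
  simp only [Df, Finset.prod_range_add, ← iterate_add_apply]
  congr 2 with i
  congr 1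
  omega

theorem Df_ne_zero (hf0 : ∀ z, f z ≠ 0) (n : ℕ) (z : ℂ) : Df f n z ≠ 0 :=
  Finset.prod_ne_zero_iff.mpr fun i _ => by rw [iterate_succ_apply']; exact hf0 _

theorem pow_le_norm_Df {μ : ℝ} (hμ : 0 ≤ μ) {m : ℕ} {y : ℂ}
    (h : ∀ i < m, μ ≤ ‖f (f^[i] y)‖) : μ ^ m ≤ ‖Df f m y‖ := by
  rw [Df, norm_prod, Finset.pow_eq_prod_const]
  refine Finset.prod_le_prod (fun _ _ => hμ) fun i hi => ?_
  rw [iterate_succ_apply']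
  exact h i (Finset.mem_range.mp hi)

theorem le_norm_Df_of_iterate_mem {S : Set ℂ} {n0 : ℕ} (hn0 : 1 ≤ n0) {μ L : ℝ} (hμ0 : 0 ≤ μ)
    (hμ1 : μ ≤ 1) (hL : 1 ≤ L) (hfS : ∀ y ∈ S, μ ≤ ‖f y‖)
    (hexp : ∀ y ∈ S, L ^ n0 ≤ ‖Df f n0 y‖) (m : ℕ) (y : ℂ) (hy : ∀ i < m, f^[i] y ∈ S) :
    (μ / L) ^ n0 * L ^ m ≤ ‖Df f m y‖ := by
  induction m using Nat.strong_induction_on generalizing y with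
  | _ m ih =>
    have hL0 : 0 < L := by linarith
    rcases lt_or_ge m n0 with hm | hm
    · calc (μ / L) ^ n0 * L ^ m = μ ^ n0 * (L ^ m / L ^ n0) := by rw [div_pow]; ring
        _ ≤ μ ^ n0 * 1 := by
          gcongr
          exact div_le_one_of_le₀ (pow_le_pow_right₀ hL hm.le) (by positivity)
        _ ≤ μ ^ m := by rw [mul_one]; exact pow_le_pow_of_le_one hμ0 hμ1 hm.le
        _ ≤ ‖Df f m y‖ := pow_le_norm_Df hμ0 fun i hi => hfS _ (hy i hi)
    · obtain ⟨m, rfl⟩ := Nat.exists_eq_add_of_le hm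
      have htail : (μ / L) ^ n0 * L ^ m ≤ ‖Df f m (f^[n0] y)‖ :=
        ih m (by omega) _ fun i hi => by rw [← iterate_add_apply]; exact hy _ (by omega)
      rw [Df_add, norm_mul, pow_add]
      calc (μ / L) ^ n0 * (L ^ n0 * L ^ m) = L ^ n0 * ((μ / L) ^ n0 * L ^ m) := by ring
        _ ≤ ‖Df f n0 y‖ * ‖Df f m (f^[n0] y)‖ :=
          mul_le_mul (hexp y (hy 0 (by omega))) htail (by positivity) (norm_nonneg _)

end Derivative

theorem norm_log_one_add_mul_le {w : ℂ} (hw : ‖w‖ < 1) :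
    ‖Complex.log (1 + w)‖ * (1 - ‖w‖) ≤ ‖w‖ := by
  have h := Complex.norm_log_one_add_le hw
  have h1 : 0 < 1 - ‖w‖ := by linarith
  have h2 : ‖w‖ ^ 2 * (1 - ‖w‖)⁻¹ / 2 * (1 - ‖w‖) = ‖w‖ ^ 2 / 2 := by field_simp
  nlinarith [norm_nonneg w]

section ExpFamily

variable {lam : ℂ} {f : ℂ → ℂ}

theorem ne_zero_of_eq_mul_exp (hlam : lam ≠ 0) (hf : ∀ z, f z = lam * Complex.exp z) (z : ℂ) :
    f z ≠ 0 := by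
  rw [hf]; exact mul_ne_zero hlam (Complex.exp_ne_zero z)

theorem exists_le_norm_of_isBounded (hlam : lam ≠ 0) (hf : ∀ z, f z = lam * Complex.exp z)
    {S : Set ℂ} (hS : Bornology.IsBounded S) : ∃ μ, 0 < μ ∧ μ ≤ 1 ∧ ∀ y ∈ S, μ ≤ ‖f y‖ := by
  obtain ⟨R, hR⟩ := hS.exists_norm_le
  refine ⟨min 1 (‖lam‖ * Real.exp (-R)), by positivity, min_le_left _ _, fun y hy => ?_⟩
  refine (min_le_right _ _).trans ?_
  rw [hf, norm_mul, Complex.norm_exp]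
  gcongr
  linarith [hR y hy, neg_abs_le y.re, Complex.abs_re_le_norm y]

theorem exists_uniform_expansion (hlam : lam ≠ 0) (hf : ∀ z, f z = lam * Complex.exp z)
    {S : Set ℂ} (hS : Bornology.IsBounded S) {n0 : ℕ} (hn0 : 1 ≤ n0) {β : ℝ} (hβ : 0 < β)
    (hSexp : ∀ y ∈ S, Real.exp β ≤ ‖Df f n0 y‖) :
    ∃ C q : ℝ, 0 < C ∧ 0 ≤ q ∧ q < 1 ∧
      ∀ m y, (∀ i < m, f^[i] y ∈ S) → C ≤ q ^ m * ‖Df f m y‖ := by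
  obtain ⟨μ, hμ0, hμ1, hμ⟩ := exists_le_norm_of_isBounded hlam hf hS
  set L := Real.exp (β / n0)
  have hL : 1 < L := Real.one_lt_exp_iff.mpr (by positivity)
  have hLn0 : ∀ y ∈ S, L ^ n0 ≤ ‖Df f n0 y‖ := fun y hy => by
    rw [← Real.exp_nat_mul, mul_div_cancel₀ _ (by positivity)]
    exact hSexp y hy
  refine ⟨(μ / L) ^ n0, L⁻¹, by positivity, by positivity, inv_lt_one_of_one_lt₀ hL,
    fun m y hy => ?_⟩
  rw [inv_pow, ← div_eq_inv_mul, le_div_iff₀ (by positivity)]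
  exact le_norm_Df_of_iterate_mem hn0 hμ0.le hμ1 hL.le hμ hLn0 m y hy

/-- The branch of `f⁻¹` near `f z` taking `f z` to `z`. -/
noncomputable def logBranch (f : ℂ → ℂ) (z y : ℂ) : ℂ := z + Complex.log (y / f z)

theorem logBranch_self {z : ℂ} (hz : f z ≠ 0) : logBranch f z (f z) = z := by
  simp [logBranch, div_self hz]

theorem apply_logBranch (hf : ∀ z, f z = lam * Complex.exp z) {z y : ℂ} (hz : f z ≠ 0)
    (hy : y ≠ 0) : f (logBranch f z y) = y := by
  rw [logBranch, hf, Complex.exp_add, Complex.exp_log (div_ne_zero hy hz), ← mul_assoc, ← hf,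
    mul_div_cancel₀ _ hz]

theorem div_eq_one_add {y a : ℂ} (ha : a ≠ 0) : y / a = 1 + (y - a) / a := by
  field_simp; ring

theorem norm_logBranch_sub_mul_le {z y : ℂ} (hz : f z ≠ 0) {ε : ℝ} (hε : ε < 1)
    (h : ‖y - f z‖ ≤ ε * ‖f z‖) :
    ‖logBranch f z y - z‖ * ((1 - ε) * ‖f z‖) ≤ ‖y - f z‖ := by
  have hfz : 0 < ‖f z‖ := norm_pos_iff.mpr hz
  have hw : ‖(y - f z) / f z‖ ≤ ε := by rw [norm_div, div_le_iff₀ hfz]; exact h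
  have hlog := norm_log_one_add_mul_le (hw.trans_lt hε)
  rw [logBranch, add_sub_cancel_left, div_eq_one_add hz]
  rw [norm_div, le_div_iff₀ hfz] at hlog
  calc ‖Complex.log (1 + (y - f z) / f z)‖ * ((1 - ε) * ‖f z‖)
      ≤ ‖Complex.log (1 + (y - f z) / f z)‖ * (1 - ‖(y - f z) / f z‖) * ‖f z‖ := by
        rw [mul_assoc]; gcongr
    _ ≤ ‖y - f z‖ := by rwa [norm_div] at *

theorem DifferentiableAt.logBranch {g : ℂ → ℂ} {z u : ℂ} (hg : DifferentiableAt ℂ g u)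
    (h : ‖g u - f z‖ < ‖f z‖) : DifferentiableAt ℂ (fun v => logBranch f z (g v)) u := by
  have hz : f z ≠ 0 := norm_pos_iff.mp ((norm_nonneg _).trans_lt h)
  refine (differentiableAt_const z).add ((hg.div_const (f z)).clog ?_)
  rw [div_eq_one_add hz]
  exact Complex.mem_slitPlane_of_norm_lt_one (by rwa [norm_div, div_lt_one (norm_pos_iff.mpr hz)])

end ExpFamily

section InverseBranch

variable {lam : ℂ} {f : ℂ → ℂ}

noncomputable def invBranch (f : ℂ → ℂ) : ℂ → ℕ → ℂ → ℂ
  | _, 0 => id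
  | z, k + 1 => fun u => logBranch f z (invBranch f (f z) k u)

theorem invBranch_iterate_self (hf0 : ∀ z, f z ≠ 0) (k : ℕ) (z : ℂ) :
    invBranch f z k (f^[k] z) = z := by
  induction k generalizing z with
  | zero => rfl
  | succ k ih => simp only [invBranch, iterate_succ_apply, ih, logBranch_self (hf0 z)]

def BranchEstimate (f : ℂ → ℂ) (z : ℂ) (k : ℕ) (θ : ℝ) (u : ℂ) : Prop :=
  f^[k] (invBranch f z k u) = u ∧ DifferentiableAt ℂ (invBranch f z k) u ∧
    ‖invBranch f z k u - z‖ * (θ * ‖Df f k z‖) ≤ ‖u - f^[k] z‖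

theorem branchEstimate_zero (z u : ℂ) : BranchEstimate f z 0 1 u :=
  ⟨rfl, differentiableAt_id, by simp [Df, invBranch]⟩

theorem BranchEstimate.mono {z u : ℂ} {k : ℕ} {θ θ' : ℝ} (h : BranchEstimate f z k θ u)
    (hθ : θ' ≤ θ) : BranchEstimate f z k θ' u := by
  refine ⟨h.1, h.2.1, le_trans ?_ h.2.2⟩
  have := mul_nonneg (norm_nonneg (invBranch f z k u - z)) (norm_nonneg (Df f k z))
  nlinarith

theorem BranchEstimate.succ (hf : ∀ z, f z = lam * Complex.exp z) (hf0 : ∀ z, f z ≠ 0)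
    {z u : ℂ} {k : ℕ} {θ ε : ℝ} (h : BranchEstimate f (f z) k θ u) (hθ : 0 < θ) (hε1 : ε < 1)
    (hε : ‖u - f^[k + 1] z‖ ≤ ε * (θ * ‖Df f (k + 1) z‖)) :
    BranchEstimate f z (k + 1) (θ * (1 - ε)) u := by
  obtain ⟨hinv, hdiff, hest⟩ := h
  set y := invBranch f (f z) k u
  rw [iterate_succ_apply] at hε
  have hD : 0 < θ * ‖Df f k (f z)‖ := mul_pos hθ (norm_pos_iff.mpr (Df_ne_zero hf0 k _))
  -- `ε` bounds the relative error of `y` at `f z`, because `Df^{k+1}(z) = f z · Df^k(f z)`.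
  have hy : ‖y - f z‖ ≤ ε * ‖f z‖ := by
    refine le_of_mul_le_mul_right ?_ hD
    calc ‖y - f z‖ * (θ * ‖Df f k (f z)‖) ≤ ‖u - f^[k] (f z)‖ := hest
      _ ≤ ε * ‖f z‖ * (θ * ‖Df f k (f z)‖) := by rw [Df_succ', norm_mul] at hε; linarith
  have hyf : ‖y - f z‖ < ‖f z‖ := hy.trans_lt (by nlinarith [norm_pos_iff.mpr (hf0 z)])
  refine ⟨?_, hdiff.logBranch hyf, ?_⟩
  · have hy0 : y ≠ 0 := fun h0 => by simp [h0] at hyf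
    show f^[k] (f (logBranch f z y)) = u
    rw [apply_logBranch hf (hf0 z) hy0, hinv]
  · have hlog := norm_logBranch_sub_mul_le (hf0 z) hε1 hy
    rw [iterate_succ_apply]
    calc ‖logBranch f z y - z‖ * (θ * (1 - ε) * ‖Df f (k + 1) z‖)
        = ‖logBranch f z y - z‖ * ((1 - ε) * ‖f z‖) * (θ * ‖Df f k (f z)‖) := by
          rw [Df_succ', norm_mul]; ring
      _ ≤ ‖y - f z‖ * (θ * ‖Df f k (f z)‖) := by gcongr
      _ ≤ ‖u - f^[k] (f z)‖ := hest

/-- The factor `(1 + q^k) / 2` comes from the relative error `ε_k = 2 r q^k / C ≤ (1 - q) q^k / 2`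
of the step from `f z` to `z`, which satisfies `(1 + q^k) / 2 · (1 - ε_k) ≥ (1 + q^{k+1}) / 2`. -/
theorem branchEstimate_of_expanding (hf : ∀ z, f z = lam * Complex.exp z) (hf0 : ∀ z, f z ≠ 0)
    {S : Set ℂ} {C q r : ℝ} (hC : 0 < C) (hq : 0 ≤ q)
    (hexp : ∀ m y, (∀ i < m, f^[i] y ∈ S) → C ≤ q ^ m * ‖Df f m y‖) (hr : 4 * r ≤ C * (1 - q))
    (k : ℕ) (z : ℂ) (hz : ∀ i < k, f^[i] z ∈ S) (u : ℂ) (hu : ‖u - f^[k] z‖ ≤ r) :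
    BranchEstimate f z k ((1 + q ^ k) / 2) u := by
  induction k generalizing z with
  | zero => simpa using branchEstimate_zero z u
  | succ k ih =>
    have hr0 : 0 ≤ r := (norm_nonneg _).trans hu
    have hq1 : q ≤ 1 := by nlinarith
    have hqk : q ^ (k + 1) ≤ q ^ k := pow_le_pow_of_le_one hq hq1 (Nat.le_succ k)
    have hqk1 : q ^ k ≤ 1 := pow_le_one₀ hq hq1
    have hIH := ih (f z) (fun i hi => by rw [← iterate_succ_apply]; exact hz _ (by omega))
      (by rwa [← iterate_succ_apply])
    have hD := hexp (k + 1) z hz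
    set ε := 2 * r * q ^ k / C
    have hε1 : ε < 1 := by
      rw [div_lt_one hC]; nlinarith [pow_nonneg hq k]
    have hε : ‖u - f^[k + 1] z‖ ≤ ε * ((1 + q ^ k) / 2 * ‖Df f (k + 1) z‖) := by
      have hD' : C ≤ q ^ k * ‖Df f (k + 1) z‖ := hD.trans (by gcongr)
      calc ‖u - f^[k + 1] z‖ ≤ r / C * C := by rwa [div_mul_cancel₀ _ hC.ne']
        _ ≤ r / C * (q ^ k * ‖Df f (k + 1) z‖) := by gcongr
        _ = ε * (1 / 2 * ‖Df f (k + 1) z‖) := by ring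
        _ ≤ ε * ((1 + q ^ k) / 2 * ‖Df f (k + 1) z‖) := by gcongr; linarith [pow_nonneg hq k]
    refine (hIH.succ hf hf0 (by positivity) hε1 hε).mono ?_
    have hεq : ε ≤ (1 - q) / 2 * q ^ k := by
      rw [div_le_iff₀ hC]; nlinarith [pow_nonneg hq k]
    nlinarith [pow_nonneg hq k, pow_succ q k]

theorem branchEstimate_of_one_le_norm_Df (hf : ∀ z, f z = lam * Complex.exp z)
    (hf0 : ∀ z, f z ≠ 0) {S : Set ℂ} {C q r : ℝ} (hC : 0 < C) (hq : 0 ≤ q)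
    (hexp : ∀ m y, (∀ i < m, f^[i] y ∈ S) → C ≤ q ^ m * ‖Df f m y‖) (hr : 4 * r ≤ C * (1 - q))
    (hr1 : 4 * r ≤ 1) {k : ℕ} {z : ℂ} (hz : ∀ i < k, f^[i + 1] z ∈ S)
    (hDf : 1 ≤ ‖Df f (k + 1) z‖) (u : ℂ) (hu : ‖u - f^[k + 1] z‖ ≤ r) :
    BranchEstimate f z (k + 1) (1 / 4) u := by
  have hr0 : 0 ≤ r := (norm_nonneg _).trans hu
  have hqk : 0 ≤ q ^ k := pow_nonneg hq k
  have hIH := branchEstimate_of_expanding hf hf0 hC hq hexp hr k (f z)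
    (fun i hi => by rw [← iterate_succ_apply]; exact hz i hi) u (by rwa [← iterate_succ_apply])
  have hε : ‖u - f^[k + 1] z‖ ≤ 2 * r * ((1 + q ^ k) / 2 * ‖Df f (k + 1) z‖) :=
    calc ‖u - f^[k + 1] z‖ ≤ 2 * r * (1 / 2 * 1) := by linarith
      _ ≤ 2 * r * ((1 + q ^ k) / 2 * ‖Df f (k + 1) z‖) := by gcongr; linarith
  refine (hIH.succ hf hf0 (by positivity) (by linarith) hε).mono ?_
  nlinarith

theorem isOpen_image_ball_of_leftInvOn {g F : ℂ → ℂ} {c : ℂ} {r : ℝ} (hr : 0 < r)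
    (hg : DifferentiableOn ℂ g (ball c r)) (hFg : LeftInvOn F g (ball c r)) :
    IsOpen (g '' ball c r) := by
  refine ((hg.analyticOnNhd isOpen_ball).is_constant_or_isOpen
    (convex_ball c r).isPreconnected).resolve_left ?_ _ subset_rfl isOpen_ball
  rintro ⟨w, hw⟩
  have hc : c ∈ ball c r := mem_ball_self hr
  have hc' : c + r / 2 ∈ ball c r := by
    rw [mem_ball, dist_eq_norm, add_sub_cancel_left, Complex.norm_div, Complex.norm_real,
      Real.norm_of_nonneg hr.le]
    norm_num; linarith
  have h1 := hFg hc
  have h2 := hFg hc'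
  rw [hw c hc] at h1
  rw [hw _ hc', h1] at h2
  have : (r : ℂ) / 2 = 0 := by linear_combination -h2
  simp [hr.ne'] at this

theorem exists_isOpen_injOn_image_eq_ball (hf0 : ∀ z, f z ≠ 0) {z : ℂ} {k : ℕ} {θ r ρ : ℝ}
    (hr : 0 < r) (hθ : 0 < θ) (hρ : r ≤ ρ * (θ * ‖Df f k z‖))
    (hB : ∀ u ∈ ball (f^[k] z) r, BranchEstimate f z k θ u) :
    ∃ U : Set ℂ, IsOpen U ∧ z ∈ U ∧ U ⊆ ball z ρ ∧
      InjOn f^[k] U ∧ f^[k] '' U = ball (f^[k] z) r := by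
  have hinv : LeftInvOn f^[k] (invBranch f z k) (ball (f^[k] z) r) := fun u hu => (hB u hu).1
  refine ⟨invBranch f z k '' ball (f^[k] z) r,
    isOpen_image_ball_of_leftInvOn hr (fun u hu => (hB u hu).2.1.differentiableWithinAt) hinv,
    ⟨f^[k] z, mem_ball_self hr, invBranch_iterate_self hf0 k z⟩, ?_,
    hinv.rightInvOn_image.injOn, hinv.image_image⟩
  rintro _ ⟨u, hu, rfl⟩
  rw [mem_ball, dist_eq_norm]
  have hest := (hB u hu).2.2
  rw [mem_ball, dist_eq_norm] at hu
  by_contra! hle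
  have := mul_nonneg hθ.le (norm_nonneg (Df f k z))
  nlinarith

end InverseBranch

theorem stmt_7_general (lam : ℂ) (hlam : lam ≠ 0) (f : ℂ → ℂ)
    (hf : ∀ z, f z = lam * Complex.exp z)
    (hPbdd : Bornology.IsBounded (postSing f))
    (n0 : ℕ) (hn0 : 1 ≤ n0) (α : ℝ) (hα : 0 < α)
    (δ : ℝ) (hδ0 : 0 < δ)
    (hδ : ∀ w ∈ thickening (3 * δ) (postSing f),
      Real.exp (α / 2) < ‖Df f n0 w‖)
    (Δ : ℝ) (hΔ1 : 1 < Δ) :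
    ∃ δ0 : ℝ, 0 < δ0 ∧ ∀ (z : ℂ) (k : ℕ), 1 ≤ k →
      (∀ j : ℕ, 1 ≤ j → j ≤ k → f^[j] z ∈ thickening δ (postSing f)) →
      1 < ‖Df f k z‖ →
      ∃ U : Set ℂ, IsOpen U ∧ z ∈ U ∧ U ⊆ ball z δ ∧
        InjOn f^[k] U ∧ f^[k] '' U = ball (f^[k] z) (Δ * δ0) := by
  obtain ⟨C, q, hC, hq0, hq1, hexp⟩ := exists_uniform_expansion hlam hf
    (hPbdd.thickening (δ := δ)) hn0 (half_pos hα)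
    fun y hy => (hδ y (thickening_mono (by linarith) _ hy)).le
  have hf0 := ne_zero_of_eq_mul_exp hlam hf
  set r := min δ (min 1 (C * (1 - q))) / 4 with hr_def
  have hr0 : 0 < r := by
    have : 0 < C * (1 - q) := mul_pos hC (by linarith)
    positivity
  have h4r : 4 * r = min δ (min 1 (C * (1 - q))) := by rw [hr_def]; ring
  have hrδ : 4 * r ≤ δ := h4r ▸ min_le_left _ _
  have hr1 : 4 * r ≤ 1 := h4r ▸ (min_le_right _ _).trans (min_le_left _ _)
  have hr : 4 * r ≤ C * (1 - q) := h4r ▸ (min_le_right _ _).trans (min_le_right _ _)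
  refine ⟨r / Δ, by positivity, fun z k hk horb hDf => ?_⟩
  obtain ⟨k, rfl⟩ := Nat.exists_eq_add_of_le' hk
  rw [mul_div_cancel₀ _ (by positivity : Δ ≠ 0)]
  refine exists_isOpen_injOn_image_eq_ball hf0 hr0 (by norm_num : (0 : ℝ) < 1 / 4) (by nlinarith)
    fun u hu => branchEstimate_of_one_le_norm_Df hf hf0 hC hq0 hexp hr hr1
      (fun i hi => horb _ (by omega) (by omega)) hDf.le u (mem_ball_iff_norm.mp hu).le

/-- with `V = B(P(f), δ)`, there is `δ0 > 0` such that if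
`f^j(z) ∈ V` for `j = 1, …, k` and `|Df^k(z)| > 1`, then a neighbourhood
`U ⊆ B(z, δ)` of `z` is mapped injectively by `f^k` onto `B(f^k(z), Δ·δ0)`. -/
theorem stmt_7 (lam : ℂ) (hlam : lam ≠ 0) (f : ℂ → ℂ)
    (hf : ∀ z, f z = lam * Complex.exp z)
    (hPbdd : Bornology.IsBounded (postSing f))
    (n0 : ℕ) (hn0 : 1 ≤ n0) (α : ℝ) (hα : 0 < α)
    (hrep : ∀ z ∈ postSing f, Real.exp α < ‖Df f n0 z‖)
    (δ : ℝ) (hδ0 : 0 < δ) (hδ1 : δ < 1)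
    (hδ : ∀ w ∈ thickening (3 * δ) (postSing f),
      Real.exp (α / 2) < ‖Df f n0 w‖)
    (Δ : ℝ) (hΔ1 : 1 < Δ)
    (hΔ : ∀ g : ℂ → ℂ, DifferentiableOn ℂ g (ball (0 : ℂ) Δ) →
      InjOn g (ball (0 : ℂ) Δ) →
      ∀ y ∈ ball (0 : ℂ) 1, ∀ w ∈ ball (0 : ℂ) 1,
        ‖deriv g y‖ ≤ 2 * ‖deriv g w‖) :
    ∃ δ0 : ℝ, 0 < δ0 ∧ ∀ (z : ℂ) (k : ℕ), 1 ≤ k →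
      (∀ j : ℕ, 1 ≤ j → j ≤ k → f^[j] z ∈ thickening δ (postSing f)) →
      1 < ‖Df f k z‖ →
      ∃ U : Set ℂ, IsOpen U ∧ z ∈ U ∧ U ⊆ ball z δ ∧
        InjOn f^[k] U ∧ f^[k] '' U = ball (f^[k] z) (Δ * δ0) :=
  stmt_7_general lam hlam f hf hPbdd n0 hn0 α hα δ hδ0 hδ Δ hΔ1
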